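/- arXiv:2006.16815 — 4 statements merged into one kernel-verified Lean document; each statement's English description precedes it below -/
import Mathlib

section
/- Define Q_d(λ) = q_d(λ)·q_{d-2}(λ) − q_{d-1}(λ)^2 where q_n = M_{K_n}. Then for d ≥ 5, Q_d(λ) = λ·q_{d-2}(λ)·(q_{d-3}(λ) − λ·q_{d-4}(λ)) + (d-2)^2·λ^2·Q_{d-2}(λ). -/
set_option maxHeartbeats 1000000


open Finset SimpleGraph

noncomputable section

/-- `M` is a matching of `G`: a finset of edges of `G`, pairwise vertex-disjoint. -/
def IsMatchingSet {V : Type*} (G : SimpleGraph V) (M : Finset (Sym2 V)) : Prop :=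
  (∀ e ∈ M, e ∈ G.edgeSet) ∧
    ∀ e ∈ M, ∀ f ∈ M, e ≠ f → ∀ v : V, ¬(v ∈ e ∧ v ∈ f)

/-- The finset of all matchings of `G`. -/
def matchingsOf {V : Type*} [Fintype V] (G : SimpleGraph V) : Finset (Finset (Sym2 V)) := by
  classical exact Finset.univ.filter fun M => IsMatchingSet G M

/-- `m_k(G)`: the number of matchings of size `k` in `G`. -/
def mCount {V : Type*} [Fintype V] (G : SimpleGraph V) (k : ℕ) : ℕ := by
  classical exact ((matchingsOf G).filter fun M => M.card = k).card

/-- The matching generating polynomial (partition function) `M_G(λ) = ∑_M λ^{|M|}`. -/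
def matchingGen {V : Type*} [Fintype V] (G : SimpleGraph V) (lam : ℝ) : ℝ :=
  ∑ M ∈ matchingsOf G, lam ^ M.card

/-- `q n` : the matching generating polynomial of the complete graph `K_n`. -/
def q (n : ℕ) (lam : ℝ) : ℝ := matchingGen (⊤ : SimpleGraph (Fin n)) lam

/-- `Q_d(λ) = q_d(λ)·q_{d-2}(λ) − q_{d-1}(λ)²`. -/
def Q (d : ℕ) (lam : ℝ) : ℝ := q d lam * q (d - 2) lam - (q (d - 1) lam) ^ 2

lemma mem_matchingsOf {V : Type*} [Fintype V] {G : SimpleGraph V} {M : Finset (Sym2 V)} :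
    M ∈ matchingsOf G ↔ IsMatchingSet G M := by
  simp [matchingsOf]

lemma isMatchingSet_top_iff {V : Type*} {M : Finset (Sym2 V)} :
    IsMatchingSet (⊤ : SimpleGraph V) M ↔
      (∀ e ∈ M, ¬ e.IsDiag) ∧
        ∀ e ∈ M, ∀ f ∈ M, e ≠ f → ∀ v : V, ¬(v ∈ e ∧ v ∈ f) := by
  unfold IsMatchingSet
  refine and_congr ?_ Iff.rfl
  refine forall₂_congr fun e he => ?_
  induction e using Sym2.ind with
  | _ a b => simp [SimpleGraph.mem_edgeSet]

lemma sum_matchings_supported {W V : Type*} [Fintype W] [Fintype V] [DecidableEq V]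
    (f : W ↪ V) (lam : ℝ) (S : Finset (Finset (Sym2 V)))
    (hS : ∀ M, M ∈ S ↔ (IsMatchingSet (⊤ : SimpleGraph V) M ∧
      ∀ e ∈ M, ∀ x ∈ e, x ∈ Set.range f)) :
    ∑ M ∈ S, lam ^ M.card = matchingGen (⊤ : SimpleGraph W) lam := by
  classical
  have hinj : Function.Injective (Sym2.map f) := Sym2.map.injective f.injective
  have hmapeq : ∀ M : Finset (Sym2 V), (∀ e ∈ M, ∀ x ∈ e, x ∈ Set.range f) →
      (M.preimage (Sym2.map f) hinj.injOn).map ⟨Sym2.map f, hinj⟩ = M := by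
    intro M hsupp
    ext e
    simp only [Finset.mem_map, Finset.mem_preimage, Function.Embedding.coeFn_mk]
    constructor
    · rintro ⟨e', he', rfl⟩; exact he'
    · intro he
      have hrange : ∀ x ∈ e, x ∈ Set.range f := hsupp e he
      induction e using Sym2.ind with
      | _ a b =>
        obtain ⟨a', ha'⟩ := hrange a (by simp)
        obtain ⟨b', hb'⟩ := hrange b (by simp)
        exact ⟨s(a', b'), by simp [Sym2.map_pair_eq, ha', hb', he],
          by simp [Sym2.map_pair_eq, ha', hb']⟩
  rw [matchingGen]
  refine Finset.sum_bij' (fun M _ => M.preimage (Sym2.map f) hinj.injOn)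
    (fun M _ => M.map ⟨Sym2.map f, hinj⟩) ?_ ?_ ?_ ?_ ?_
  · -- preimage is a matching
    intro M hM
    rw [hS, isMatchingSet_top_iff] at hM
    obtain ⟨⟨h1, h2⟩, h3⟩ := hM
    rw [mem_matchingsOf, isMatchingSet_top_iff]
    constructor
    · intro e he
      rw [Finset.mem_preimage] at he
      have := h1 _ he
      rwa [Sym2.isDiag_map f.injective] at this
    · intro e he e' he' hne v hv
      rw [Finset.mem_preimage] at he he'
      refine h2 _ he _ he' (fun h => hne (hinj h)) (f v) ?_
      exact ⟨Sym2.mem_map.2 ⟨v, hv.1, rfl⟩, Sym2.mem_map.2 ⟨v, hv.2, rfl⟩⟩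
  · -- map is a matching supported in range
    intro M hM
    rw [mem_matchingsOf, isMatchingSet_top_iff] at hM
    obtain ⟨h1, h2⟩ := hM
    rw [hS, isMatchingSet_top_iff]
    refine ⟨⟨?_, ?_⟩, ?_⟩
    · intro e he
      rw [Finset.mem_map] at he
      obtain ⟨e', he', rfl⟩ := he
      show ¬ (Sym2.map f e').IsDiag
      rw [Sym2.isDiag_map f.injective]
      exact h1 _ he'
    · intro e he e' he' hne v hv
      rw [Finset.mem_map] at he he'
      obtain ⟨a, ha, rfl⟩ := he
      obtain ⟨b, hb, rfl⟩ := he'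
      simp only [Function.Embedding.coeFn_mk] at hne hv
      obtain ⟨x, hx, hxv⟩ := Sym2.mem_map.1 hv.1
      obtain ⟨y, hy, hyv⟩ := Sym2.mem_map.1 hv.2
      have hxy : x = y := f.injective (by rw [hxv, hyv])
      subst hxy
      exact h2 _ ha _ hb (fun h => hne (by rw [h])) x ⟨hx, hy⟩
    · intro e he x hx
      rw [Finset.mem_map] at he
      obtain ⟨e', _, rfl⟩ := he
      simp only [Function.Embedding.coeFn_mk] at hx
      obtain ⟨a, _, rfl⟩ := Sym2.mem_map.1 hx
      exact ⟨a, rfl⟩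
  · -- left inverse
    intro M hM
    rw [hS] at hM
    exact hmapeq M hM.2
  · -- right inverse
    intro M _
    exact Finset.preimage_map ⟨Sym2.map f, hinj⟩ M
  · -- values
    intro M hM
    rw [hS] at hM
    have := hmapeq M hM.2
    have hcard : (M.preimage (Sym2.map f) hinj.injOn).card = M.card := by
      conv_rhs => rw [← this]
      rw [Finset.card_map]
    rw [hcard]

lemma matchingGen_top_card {W : Type*} [Fintype W] [DecidableEq W] (lam : ℝ) :
    matchingGen (⊤ : SimpleGraph W) lam = q (Fintype.card W) lam := by
  classical
  rw [q]
  refine sum_matchings_supported ((Fintype.equivFin W).symm.toEmbedding) lam _ ?_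
  intro M
  rw [mem_matchingsOf]
  refine (and_iff_left ?_).symm
  intro e _ x _
  exact ⟨Fintype.equivFin W x, by simp⟩

lemma IsMatchingSet.subset {V : Type*} {G : SimpleGraph V} {M M' : Finset (Sym2 V)}
    (hsub : M' ⊆ M) (h : IsMatchingSet G M) : IsMatchingSet G M' :=
  ⟨fun e he => h.1 e (hsub he), fun e he f hf => h.2 e (hsub he) f (hsub hf)⟩

lemma q_rec (n : ℕ) (lam : ℝ) :
    q (n + 2) lam = q (n + 1) lam + (n + 1 : ℝ) * lam * q n lam := by
  classical
  set v : Fin (n + 2) := Fin.last (n + 1) with hv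
  rw [q, matchingGen,
    ← Finset.sum_filter_add_sum_filter_not (matchingsOf (⊤ : SimpleGraph (Fin (n + 2))))
      (fun M => ∀ e ∈ M, v ∉ e)]
  have hrangecast : ∀ x : Fin (n + 2),
      x ∈ Set.range (Fin.castSuccEmb : Fin (n + 1) ↪ Fin (n + 2)) ↔ x ≠ v := by
    intro x
    constructor
    · rintro ⟨j, rfl⟩
      exact (Fin.exists_castSucc_eq).1 ⟨j, rfl⟩
    · intro hx
      obtain ⟨j, hj⟩ := (Fin.exists_castSucc_eq).2 hx
      exact ⟨j, hj⟩
  have hpart1 : ∑ M ∈ (matchingsOf (⊤ : SimpleGraph (Fin (n + 2)))).filter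
      (fun M => ∀ e ∈ M, v ∉ e), lam ^ M.card = q (n + 1) lam := by
    rw [q]
    refine sum_matchings_supported (Fin.castSuccEmb : Fin (n + 1) ↪ Fin (n + 2)) lam _ ?_
    intro M
    rw [Finset.mem_filter, mem_matchingsOf]
    refine and_congr_right fun _ => ⟨?_, ?_⟩
    · intro h e he x hx
      rw [hrangecast]
      intro hxv
      exact h e he (hxv ▸ hx)
    · intro h e he hve
      exact ((hrangecast v).1 (h e he v hve)) rfl
  rw [hpart1]
  -- second part
  have hsplit : (matchingsOf (⊤ : SimpleGraph (Fin (n + 2)))).filter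
      (fun M => ¬ ∀ e ∈ M, v ∉ e)
      = (Finset.univ.erase v).biUnion (fun w =>
          (matchingsOf (⊤ : SimpleGraph (Fin (n + 2)))).filter (fun M => s(v, w) ∈ M)) := by
    ext M
    simp only [Finset.mem_filter, Finset.mem_biUnion, Finset.mem_erase, Finset.mem_univ,
      and_true]
    constructor
    · rintro ⟨hM, h⟩
      push_neg at h
      obtain ⟨e, he, hve⟩ := h
      obtain ⟨w, rfl⟩ := Sym2.mem_iff_exists.1 hve
      have hnd : ¬ (s(v, w) : Sym2 (Fin (n+2))).IsDiag :=
        (isMatchingSet_top_iff.1 (mem_matchingsOf.1 hM)).1 _ he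
      refine ⟨w, ?_, hM, he⟩
      intro hwv
      exact hnd (by simp [hwv])
    · rintro ⟨w, hwv, hM, he⟩
      refine ⟨hM, ?_⟩
      push_neg
      exact ⟨s(v, w), he, by simp⟩
  rw [hsplit, Finset.sum_biUnion]
  · -- compute each fiber
    have hfiber : ∀ w : Fin (n + 2), w ≠ v →
        ∑ M ∈ (matchingsOf (⊤ : SimpleGraph (Fin (n + 2)))).filter
          (fun M => s(v, w) ∈ M), lam ^ M.card = lam * q n lam := by
      intro w hwv
      -- embedding of Fin n onto complement of {v, w}
      have hvw : v ≠ w := fun h => hwv h.symm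
      have hcards : (({v, w} : Finset (Fin (n + 2)))ᶜ).card = n := by
        rw [Finset.card_compl, Finset.card_insert_of_notMem (by simp [hvw]),
          Finset.card_singleton, Fintype.card_fin]
        omega
      set g : Fin n ↪ Fin (n + 2) :=
        ((Finset.equivFinOfCardEq hcards).symm.toEmbedding.trans
          (Function.Embedding.subtype _)) with hg
      have hrangeg : ∀ x : Fin (n + 2), x ∈ Set.range g ↔ (x ≠ v ∧ x ≠ w) := by
        intro x
        constructor
        · rintro ⟨j, rfl⟩
          have hx := ((Finset.equivFinOfCardEq hcards).symm j).2
          simp only [Finset.mem_compl, Finset.mem_insert, Finset.mem_singleton] at hx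
          push_neg at hx
          exact hx
        · intro hx
          refine ⟨(Finset.equivFinOfCardEq hcards) ⟨x, ?_⟩, by simp [hg]⟩
          simp [hx.1, hx.2]
      have key : ∑ M ∈ (matchingsOf (⊤ : SimpleGraph (Fin (n + 2)))).filter
            (fun M => s(v, w) ∈ M), lam ^ M.card
          = ∑ M ∈ (matchingsOf (⊤ : SimpleGraph (Fin (n + 2)))).filter
            (fun M => ∀ e ∈ M, ∀ x ∈ e, x ∈ Set.range g), lam * lam ^ M.card := by
        refine Finset.sum_bij' (fun M _ => M.erase s(v, w))
          (fun M _ => insert s(v, w) M) ?_ ?_ ?_ ?_ ?_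
        · intro M hM
          rw [Finset.mem_filter, mem_matchingsOf] at hM
          obtain ⟨hM, hel⟩ := hM
          rw [Finset.mem_filter, mem_matchingsOf]
          refine ⟨hM.subset (Finset.erase_subset _ _), ?_⟩
          intro e he x hx
          rw [Finset.mem_erase] at he
          rw [hrangeg]
          constructor
          · intro hxv
            exact hM.2 e he.2 _ hel he.1 x ⟨hx, by simp [hxv]⟩ 
          · intro hxw
            exact hM.2 e he.2 _ hel he.1 x ⟨hx, by simp [hxw]⟩
        · intro M hM
          rw [Finset.mem_filter, mem_matchingsOf] at hM
          obtain ⟨hM, hsupp⟩ := hM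
          rw [Finset.mem_filter, mem_matchingsOf]
          have hnotin : ∀ e ∈ M, ∀ x, x ∈ e → x ≠ v ∧ x ≠ w := by
            intro e he x hx
            have := hsupp e he x hx
            rwa [hrangeg] at this
          refine ⟨⟨?_, ?_⟩, Finset.mem_insert_self _ _⟩
          · intro e he
            rw [Finset.mem_insert] at he
            rcases he with rfl | he
            · rw [SimpleGraph.mem_edgeSet]
              exact hvw
            · exact hM.1 e he
          · intro e he f hf hef x hx
            rw [Finset.mem_insert] at he hf
            rcases he with rfl | he <;> rcases hf with rfl | hf
            · exact hef rfl
            · rcases Sym2.mem_iff.1 hx.1 with h' | h'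
              · exact (hnotin f hf x hx.2).1 h'
              · exact (hnotin f hf x hx.2).2 h'
            · rcases Sym2.mem_iff.1 hx.2 with h' | h'
              · exact (hnotin e he x hx.1).1 h'
              · exact (hnotin e he x hx.1).2 h'
            · exact hM.2 e he f hf hef x hx
        · intro M hM
          rw [Finset.mem_filter] at hM
          exact Finset.insert_erase hM.2
        · intro M hM
          rw [Finset.mem_filter] at hM
          apply Finset.erase_insert
          intro hmem
          have := hM.2 _ hmem v (by simp)
          rw [hrangeg] at this
          exact this.1 rfl
        · intro M hM
          rw [Finset.mem_filter] at hM
          have hpos : M.card ≠ 0 := Finset.card_ne_zero_of_mem hM.2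
          have : M.card = (M.erase s(v, w)).card + 1 := by
            rw [Finset.card_erase_of_mem hM.2]
            omega
          rw [this, pow_succ]
          ring
      have hq : ∑ M ∈ (matchingsOf (⊤ : SimpleGraph (Fin (n + 2)))).filter
          (fun M => ∀ e ∈ M, ∀ x ∈ e, x ∈ Set.range g), lam ^ M.card = q n lam := by
        rw [q]
        refine sum_matchings_supported g lam _ ?_
        intro M
        rw [Finset.mem_filter, mem_matchingsOf]
      rw [key, ← Finset.mul_sum, hq]
    rw [Finset.sum_congr rfl (fun w hw => hfiber w (Finset.mem_erase.1 hw).1),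
      Finset.sum_const, Finset.card_erase_of_mem (Finset.mem_univ v), Finset.card_univ,
      Fintype.card_fin, nsmul_eq_mul]
    push_cast
    ring
  · -- pairwise disjoint fibers
    intro w1 hw1 w2 hw2 hne
    simp only [Function.onFun]
    rw [Finset.disjoint_left]
    intro M hM1 hM2
    rw [Finset.mem_filter, mem_matchingsOf] at hM1 hM2
    have hedge : (s(v, w1) : Sym2 (Fin (n+2))) ≠ s(v, w2) := by
      intro h
      exact hne (Sym2.congr_right.1 h)
    exact hM1.1.2 _ hM1.2 _ hM2.2 hedge v ⟨by simp, by simp⟩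

/-- for `d ≥ 5`,
`Q_d(λ) = λ·q_{d-2}(λ)·(q_{d-3}(λ) − λ·q_{d-4}(λ)) + (d-2)²·λ²·Q_{d-2}(λ)`. -/
theorem Q_recursion_one (d : ℕ) (hd : 5 ≤ d) (lam : ℝ) :
    Q d lam = lam * q (d - 2) lam * (q (d - 3) lam - lam * q (d - 4) lam)
      + ((d : ℝ) - 2) ^ 2 * lam ^ 2 * Q (d - 2) lam := by
  obtain ⟨m, rfl⟩ : ∃ m, d = m + 5 := ⟨d - 5, by omega⟩
  simp only [Q, show m + 5 - 2 = m + 3 from by omega, show m + 5 - 3 = m + 2 from by omega,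
    show m + 5 - 4 = m + 1 from by omega, show m + 5 - 1 = m + 4 from by omega,
    show m + 3 - 2 = m + 1 from by omega, show m + 3 - 1 = m + 2 from by omega]
  have r1 : q (m + 5) lam = q (m + 4) lam + ((m + 3 : ℕ) + 1 : ℝ) * lam * q (m + 3) lam := by
    have := q_rec (m + 3) lam
    rwa [show m + 3 + 2 = m + 5 from by omega, show m + 3 + 1 = m + 4 from by omega] at this
  have r2 : q (m + 4) lam = q (m + 3) lam + ((m + 2 : ℕ) + 1 : ℝ) * lam * q (m + 2) lam := by
    have := q_rec (m + 2) lam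
    rwa [show m + 2 + 2 = m + 4 from by omega, show m + 2 + 1 = m + 3 from by omega] at this
  have r3 : q (m + 3) lam = q (m + 2) lam + ((m + 1 : ℕ) + 1 : ℝ) * lam * q (m + 1) lam := by
    have := q_rec (m + 1) lam
    rwa [show m + 1 + 2 = m + 3 from by omega, show m + 1 + 1 = m + 2 from by omega] at this
  rw [r1, r2, r3]
  push_cast
  ring
end
end

section
/- Let G be a d-regular graph (d ≥ 2) with no connected component isomorphic to K_{d+1}. Then ρ(C_3, K_{d+1}) − ρ(C_3, G) ≥ 1/3, where ρ(C_3, H) = N(C_3, H)/v(H) denotes the triangle density. -/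
open Finset SimpleGraph

noncomputable section

/-- `N(C₃, G)`: the number of (unlabeled) triangles of `G`. -/
def triCount {V : Type*} [Fintype V] (G : SimpleGraph V) : ℕ := by
  classical exact (G.cliqueFinset 3).card

private lemma cliqueFinset_irrel {V : Type*} [Fintype V] (G : SimpleGraph V)
    (i1 i1' : DecidableEq V) (i2 i2' : DecidableRel G.Adj) (n : ℕ) :
    @SimpleGraph.cliqueFinset V G _ i1 i2 n = @SimpleGraph.cliqueFinset V G _ i1' i2' n := by
  obtain rfl : i1 = i1' := Subsingleton.elim _ _
  obtain rfl : i2 = i2' := Subsingleton.elim _ _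
  rfl

private lemma triCount_eq {V : Type*} [Fintype V] [DecidableEq V] (G : SimpleGraph V)
    [DecidableRel G.Adj] : triCount G = (G.cliqueFinset 3).card := by
  unfold triCount
  exact congrArg Finset.card (cliqueFinset_irrel G _ _ _ _ 3)

private lemma triCount_top (n : ℕ) :
    triCount (⊤ : SimpleGraph (Fin (n + 1))) = (n + 1).choose 3 := by
  classical
  rw [triCount_eq]
  have : (⊤ : SimpleGraph (Fin (n+1))).cliqueFinset 3 = Finset.univ.powersetCard 3 := by
    ext s
    simp [SimpleGraph.mem_cliqueFinset_iff, SimpleGraph.isNClique_iff,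
      Finset.mem_powersetCard, SimpleGraph.IsClique, Set.Pairwise]
  rw [this, Finset.card_powersetCard, Finset.card_univ, Fintype.card_fin]

private lemma vertex_bound {V : Type*} [Fintype V] [DecidableEq V]
    (d : ℕ) (G : SimpleGraph V) [DecidableRel G.Adj]
    (hreg : G.IsRegularOfDegree d) (hfree : G.CliqueFree (d + 1)) (v : V) :
    ((G.cliqueFinset 3).filter (fun t => v ∈ t)).card + 1 ≤ d.choose 2 := by
  classical
  set N := G.neighborFinset v with hN
  have hNcard : N.card = d := hreg v
  have hvN : v ∉ N := by simp [hN]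
  have hnotcl : ¬ G.IsClique (insert v N : Finset V) := by
    intro hcl
    exact hfree _ ⟨hcl, by rw [card_insert_of_notMem hvN, hNcard]⟩
  obtain ⟨a, ha, b, hb, hab, hnadj⟩ : ∃ a ∈ N, ∃ b ∈ N, a ≠ b ∧ ¬ G.Adj a b := by
    rw [SimpleGraph.isClique_iff, Set.Pairwise] at hnotcl
    push_neg at hnotcl
    obtain ⟨a, ha, b, hb, hab, hnadj⟩ := hnotcl
    simp only [coe_insert, Set.mem_insert_iff, mem_coe] at ha hb
    rcases ha with rfl | ha
    · rcases hb with rfl | hb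
      · exact absurd rfl hab
      · exact absurd ((G.mem_neighborFinset _ _).1 hb) hnadj
    · rcases hb with rfl | hb
      · exact absurd (((G.mem_neighborFinset _ _).1 ha).symm) hnadj
      · exact ⟨a, ha, b, hb, hab, hnadj⟩
  have hmaps : ∀ t ∈ (G.cliqueFinset 3).filter (fun t => v ∈ t),
      t.erase v ∈ (N.powersetCard 2).erase {a, b} := by
    intro t ht
    rw [mem_filter] at ht
    obtain ⟨ht3, hvt⟩ := ht
    rw [mem_cliqueFinset_iff] at ht3
    obtain ⟨hcl, hc3⟩ := ht3
    have hsub : t.erase v ⊆ N := by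
      intro x hx
      rw [mem_erase] at hx
      rw [hN, G.mem_neighborFinset]
      exact hcl hvt hx.2 (Ne.symm hx.1)
    have hcard : (t.erase v).card = 2 := by
      rw [card_erase_of_mem hvt, hc3]
    rw [mem_erase]
    refine ⟨?_, mem_powersetCard.2 ⟨hsub, hcard⟩⟩
    intro heq
    have haT : a ∈ t := mem_of_mem_erase (heq ▸ (by simp : a ∈ ({a,b} : Finset V)))
    have hbT : b ∈ t := mem_of_mem_erase (heq ▸ (by simp : b ∈ ({a,b} : Finset V)))
    exact hnadj (hcl haT hbT hab)
  have hinj : ∀ t₁ ∈ (G.cliqueFinset 3).filter (fun t => v ∈ t),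
      ∀ t₂ ∈ (G.cliqueFinset 3).filter (fun t => v ∈ t),
      t₁.erase v = t₂.erase v → t₁ = t₂ := by
    intro t₁ h₁ t₂ h₂ h
    rw [mem_filter] at h₁ h₂
    rw [← insert_erase h₁.2, h, insert_erase h₂.2]
  have hle := card_le_card_of_injOn _ hmaps hinj
  have hmem : ({a, b} : Finset V) ∈ N.powersetCard 2 := by
    rw [mem_powersetCard]
    exact ⟨by intro x hx; simp at hx; rcases hx with rfl|rfl <;> assumption,
      Finset.card_pair hab⟩
  calc ((G.cliqueFinset 3).filter (fun t => v ∈ t)).card + 1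
      ≤ ((N.powersetCard 2).erase {a,b}).card + 1 := by omega
    _ = (N.powersetCard 2).card := by
        rw [card_erase_of_mem hmem]
        have : 1 ≤ (N.powersetCard 2).card := card_pos.2 ⟨_, hmem⟩
        omega
    _ = d.choose 2 := by rw [card_powersetCard, hNcard]

/-- if `G` is `d`-regular (d ≥ 2) with no connected component
isomorphic to `K_{d+1}` (equivalently, for a `d`-regular graph, no `(d+1)`-clique),
then `ρ(C₃, K_{d+1}) − ρ(C₃, G) ≥ 1/3`. -/
theorem triangle_density_gap {V : Type*} [Fintype V] [Nonempty V]
    (d : ℕ) (hd : 2 ≤ d) (G : SimpleGraph V) [DecidableRel G.Adj]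
    (hreg : G.IsRegularOfDegree d) (hfree : G.CliqueFree (d + 1)) :
    (1 : ℝ) / 3 ≤
      (triCount (⊤ : SimpleGraph (Fin (d + 1))) : ℝ) / (d + 1) -
        (triCount G : ℝ) / (Fintype.card V) := by
  classical
  -- double counting
  have key : ∀ t ∈ G.cliqueFinset 3, (∑ v : V, if v ∈ t then (1:ℕ) else 0) = 3 := by
    intro t ht
    rw [← Finset.card_filter, Finset.filter_univ_mem]
    exact (SimpleGraph.mem_cliqueFinset_iff.1 ht).2
  have hdc : ∑ v : V, ((G.cliqueFinset 3).filter (fun t => v ∈ t)).card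
      = 3 * (G.cliqueFinset 3).card := by
    calc ∑ v : V, ((G.cliqueFinset 3).filter (fun t => v ∈ t)).card
        = ∑ v : V, ∑ t ∈ G.cliqueFinset 3, if v ∈ t then 1 else 0 :=
          Finset.sum_congr rfl fun v _ => Finset.card_filter _ _
      _ = ∑ t ∈ G.cliqueFinset 3, ∑ v : V, if v ∈ t then 1 else 0 := Finset.sum_comm
      _ = ∑ _t ∈ G.cliqueFinset 3, 3 := Finset.sum_congr rfl key
      _ = 3 * (G.cliqueFinset 3).card := by rw [Finset.sum_const, smul_eq_mul, mul_comm]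
  have hsum : 3 * (G.cliqueFinset 3).card ≤ Fintype.card V * (d.choose 2 - 1) := by
    rw [← hdc]
    calc ∑ v : V, ((G.cliqueFinset 3).filter (fun t => v ∈ t)).card
        ≤ ∑ _v : V, (d.choose 2 - 1) := by
          refine Finset.sum_le_sum fun v _ => ?_
          have := vertex_bound d G hreg hfree v
          omega
      _ = Fintype.card V * (d.choose 2 - 1) := by
          rw [Finset.sum_const, smul_eq_mul, Finset.card_univ]
  have hc1 : 1 ≤ d.choose 2 := Nat.choose_pos hd
  have hn : (0:ℝ) < Fintype.card V := by exact_mod_cast Fintype.card_pos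
  have hc1' : (1:ℝ) ≤ (d.choose 2 : ℝ) := by exact_mod_cast hc1
  have hsum' : 3 * (triCount G : ℝ) ≤ (Fintype.card V : ℝ) * ((d.choose 2 : ℝ) - 1) := by
    rw [triCount_eq]
    have h := (Nat.cast_le (α := ℝ)).2 hsum
    push_cast [Nat.cast_sub hc1] at h
    linarith
  have h1 : (triCount G : ℝ) / (Fintype.card V) ≤ ((d.choose 2 : ℝ) - 1) / 3 := by
    rw [div_le_div_iff₀ hn (by norm_num)]
    nlinarith
  have hid : (d + 1) * d.choose 2 = (d+1).choose 3 * 3 := Nat.add_one_mul_choose_eq d 2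
  have h2 : (triCount (⊤ : SimpleGraph (Fin (d + 1))) : ℝ) / (d + 1)
      = (d.choose 2 : ℝ) / 3 := by
    rw [triCount_top]
    have hid' : ((d:ℝ) + 1) * (d.choose 2 : ℝ) = ((d+1).choose 3 : ℝ) * 3 := by
      exact_mod_cast hid
    have hd1 : (0:ℝ) < (d:ℝ) + 1 := by positivity
    field_simp
    linarith
  rw [h2]
  linarith
end
end

section
/- Let G be a d-regular graph with no connected component isomorphic to K_{d+1}. Then ρ(C_4, K_{d+1}) − ρ(C_4, G) ≤ (3(d-2)/2)·(ρ(C_3, K_{d+1}) − ρ(C_3, G)), where ρ(H, G) = N(H, G)/v(G). -/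
open Finset SimpleGraph

noncomputable section

/-- The number of cyclically ordered (labeled) 4-cycles of `G`; each unlabeled
4-cycle is counted 8 times, so `N(C₄, G)` equals this number divided by 8. -/
def c4Labeled {V : Type*} [Fintype V] (G : SimpleGraph V) : ℕ := by
  classical exact
    ((Finset.univ : Finset (V × V × V × V)).filter fun p =>
      p.1 ≠ p.2.1 ∧ p.1 ≠ p.2.2.1 ∧ p.1 ≠ p.2.2.2 ∧
      p.2.1 ≠ p.2.2.1 ∧ p.2.1 ≠ p.2.2.2 ∧ p.2.2.1 ≠ p.2.2.2 ∧
      G.Adj p.1 p.2.1 ∧ G.Adj p.2.1 p.2.2.1 ∧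
      G.Adj p.2.2.1 p.2.2.2 ∧ G.Adj p.2.2.2 p.1).card

/-- `ρ(C₃, G)`: triangle density. -/
def rho3 {V : Type*} [Fintype V] (G : SimpleGraph V) : ℝ :=
  (triCount G : ℝ) / (Fintype.card V)

/-- `ρ(C₄, G)`: density of (unlabeled) 4-cycles. -/
def rho4 {V : Type*} [Fintype V] (G : SimpleGraph V) : ℝ :=
  (c4Labeled G : ℝ) / (8 * Fintype.card V)

/-!
For a `d`-regular graph let `s_v` be the number of ordered adjacent pairs inside the
neighbourhood `N(v)`, so that `∑_v s_v = 6 N(C₃, G)`. For distinct `a, c ∈ N(v)`, the sets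
`N(v) ∩ N(a)` and `N(v) ∩ N(c)` lie in `N(v)` and miss `a` and `c` unless `a ~ c`, so by
inclusion–exclusion `a` and `c` have at least
`|N(v) ∩ N(a)| + |N(v) ∩ N(c)| - (d - 2) - 2·[a ~ c]` common neighbours besides `v`.
Summing over `v, a, c` counts labelled 4-cycles:
`8 N(C₄, G) ≥ 12 (d - 2) N(C₃, G) - v(G) d (d - 1) (d - 2)`,
with equality for `K_{d+1}`. Dividing by `v(G)` gives the density inequality
`ρ(C₄, G) ≥ 3(d - 2)/2 · ρ(C₃, G) - d (d - 1) (d - 2) / 8`, and the theorem is this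
inequality rearranged using the values of `ρ(C₃, K_{d+1})` and `ρ(C₄, K_{d+1})`.
-/

namespace Finset

theorem card_filter_distinct_triple {α : Type*} [DecidableEq α] (s : Finset α) :
    #{t ∈ s ×ˢ s ×ˢ s | t.1 ≠ t.2.1 ∧ t.1 ≠ t.2.2 ∧ t.2.1 ≠ t.2.2} =
      #s * ((#s - 1) * (#s - 2)) := by
  rw [card_filter, sum_product, ← smul_eq_mul, ← sum_const]
  refine sum_congr rfl fun x hx => ?_
  rw [sum_product, ← card_erase_of_mem hx, ← smul_eq_mul, ← sum_const,
    ← sum_filter_add_sum_filter_not s (x ≠ ·), filter_ne, add_eq_left.2]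
  · refine sum_congr rfl fun y hy => ?_
    rw [← card_filter, show #s - 2 = #s - 1 - 1 by omega, ← card_erase_of_mem hx,
      ← card_erase_of_mem hy]
    have hyx := ne_of_mem_erase hy
    congr 1
    ext z
    simp only [mem_filter, mem_erase]
    grind
  · exact sum_eq_zero fun y hy => sum_eq_zero fun z _ => if_neg (by simp_all)

theorem cast_card_compl {α R : Type*} [Fintype α] [DecidableEq α] [AddGroupWithOne R]
    (s : Finset α) : (#sᶜ : R) = Fintype.card α - #s := by
  rw [card_compl, Nat.cast_sub (card_le_univ s)]

end Finset

namespace SimpleGraph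

section Counting

variable {V : Type*} [Fintype V] [DecidableEq V] (G : SimpleGraph V) [DecidableRel G.Adj]

theorem triCount_eq_card_cliqueFinset : triCount G = #(G.cliqueFinset 3) := by
  unfold triCount
  congr!

theorem c4Labeled_eq_card : c4Labeled G =
    #{p : V × V × V × V | p.1 ≠ p.2.1 ∧ p.1 ≠ p.2.2.1 ∧ p.1 ≠ p.2.2.2 ∧
      p.2.1 ≠ p.2.2.1 ∧ p.2.1 ≠ p.2.2.2 ∧ p.2.2.1 ≠ p.2.2.2 ∧
      G.Adj p.1 p.2.1 ∧ G.Adj p.2.1 p.2.2.1 ∧ G.Adj p.2.2.1 p.2.2.2 ∧ G.Adj p.2.2.2 p.1} := by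
  unfold c4Labeled
  congr!

/-- For `d`-regular `G` this is `d (d - 1) - 2 t_v`, with `t_v` the number of non-edges in the
neighbourhood of `v`. -/
def nbhdOrderedEdgeCount (v : V) : ℕ :=
  ∑ a ∈ G.neighborFinset v, #(G.neighborFinset v ∩ G.neighborFinset a)

def rootedC4Count (v : V) : ℕ :=
  ∑ a ∈ G.neighborFinset v, ∑ c ∈ (G.neighborFinset v).erase a,
    #((G.neighborFinset a ∩ G.neighborFinset c).erase v)

def orderedTriangleFinset : Finset (V × V × V) :=
  {t | G.Adj t.1 t.2.1 ∧ G.Adj t.1 t.2.2 ∧ G.Adj t.2.1 t.2.2}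

theorem card_orderedTriangleFinset_eq_sum :
    #G.orderedTriangleFinset = ∑ v, G.nbhdOrderedEdgeCount v := by
  rw [orderedTriangleFinset, card_filter, Fintype.sum_prod_type]
  refine sum_congr rfl fun v _ => ?_
  rw [Fintype.sum_prod_type, nbhdOrderedEdgeCount, neighborFinset_eq_filter, sum_filter]
  refine sum_congr rfl fun a _ => ?_
  by_cases hva : G.Adj v a <;> simp [hva, neighborFinset_eq_filter, filter_and]

theorem card_orderedTriangleFinset :
    #G.orderedTriangleFinset = 6 * #(G.cliqueFinset 3) := by
  rw [card_eq_sum_card_fiberwise (f := fun t => {t.1, t.2.1, t.2.2}) (t := G.cliqueFinset 3)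
    fun t ht => by simpa [orderedTriangleFinset, is3Clique_triple_iff] using ht]
  rw [mul_comm, ← smul_eq_mul, ← sum_const]
  refine sum_congr rfl fun s hs => ?_
  rw [mem_cliqueFinset_iff] at hs
  have hfiber : {t ∈ G.orderedTriangleFinset | ({t.1, t.2.1, t.2.2} : Finset V) = s} =
      {t ∈ s ×ˢ s ×ˢ s | t.1 ≠ t.2.1 ∧ t.1 ≠ t.2.2 ∧ t.2.1 ≠ t.2.2} := by
    ext ⟨x, y, z⟩
    simp only [orderedTriangleFinset, mem_filter, mem_univ, true_and, mem_product]
    constructor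
    · rintro ⟨⟨hxy, hxz, hyz⟩, rfl⟩
      simp [hxy.ne, hxz.ne, hyz.ne]
    · rintro ⟨⟨hx, hy, hz⟩, hxy, hxz, hyz⟩
      refine ⟨⟨hs.1 hx hy hxy, hs.1 hx hz hxz, hs.1 hy hz hyz⟩, ?_⟩
      refine eq_of_subset_of_card_le (by simp [insert_subset_iff, *]) ?_
      rw [hs.card_eq, card_eq_three.2 ⟨x, y, z, hxy, hxz, hyz, rfl⟩]
  rw [hfiber, card_filter_distinct_triple, hs.card_eq]

theorem six_mul_triCount : 6 * triCount G = ∑ v, G.nbhdOrderedEdgeCount v := by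
  rw [triCount_eq_card_cliqueFinset, ← card_orderedTriangleFinset,
    card_orderedTriangleFinset_eq_sum]

theorem c4Labeled_eq_sum : c4Labeled G = ∑ v, G.rootedC4Count v := by
  rw [c4Labeled_eq_card, card_filter, Fintype.sum_prod_type]
  refine sum_congr rfl fun v _ => ?_
  rw [Fintype.sum_prod_type, ← sum_filter_add_sum_filter_not univ (G.Adj v),
    ← neighborFinset_eq_filter, add_eq_left.2 ?_]
  · refine sum_congr rfl fun a ha => ?_
    rw [Fintype.sum_prod_type, sum_comm, ← sum_filter_add_sum_filter_not univ
      (· ∈ (G.neighborFinset v).erase a), filter_mem_eq_inter, univ_inter, add_eq_left.2 ?_]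
    · refine sum_congr rfl fun c hc => ?_
      rw [← card_filter]
      congr 1
      ext b
      simp only [mem_neighborFinset, mem_erase, mem_filter, mem_univ, mem_inter,
        true_and] at ha hc ⊢
      grind [G.ne_of_adj, G.adj_symm]
    · refine sum_eq_zero fun c hc => sum_eq_zero fun b _ => if_neg ?_
      simp only [mem_neighborFinset, mem_filter, mem_univ, mem_erase, true_and] at ha hc
      grind [G.adj_symm]
  · refine sum_eq_zero fun a ha => sum_eq_zero fun p _ => if_neg ?_
    simp_all

theorem card_inter_add_card_inter_le {v a c : V} (hva : G.Adj v a) (hvc : G.Adj v c)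
    (hac : a ≠ c) :
    #(G.neighborFinset v ∩ G.neighborFinset a) +
        #(G.neighborFinset v ∩ G.neighborFinset c) + 2 ≤
      #((G.neighborFinset a ∩ G.neighborFinset c).erase v) + G.degree v +
        if G.Adj a c then 2 else 0 := by
  set X := G.neighborFinset v ∩ G.neighborFinset a
  set Y := G.neighborFinset v ∩ G.neighborFinset c
  have hinter : #(X ∩ Y) ≤ #((G.neighborFinset a ∩ G.neighborFinset c).erase v) := by
    refine card_le_card fun x hx => ?_
    simp only [X, Y, mem_inter, mem_erase, mem_neighborFinset] at hx ⊢
    exact ⟨(G.ne_of_adj hx.1.1).symm, hx.1.2, hx.2.2⟩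
  have hunion : #(X ∪ Y) + 2 ≤ G.degree v + if G.Adj a c then 2 else 0 := by
    rw [← card_neighborFinset_eq_degree]
    split_ifs with hadj
    · grw [card_le_card (union_subset inter_subset_left inter_subset_left)]
    · have hsub : X ∪ Y ⊆ ((G.neighborFinset v).erase a).erase c := by
        intro x hx
        simp only [X, Y, mem_union, mem_inter, mem_erase, mem_neighborFinset] at hx ⊢
        grind [G.ne_of_adj, G.adj_symm]
      have := card_le_card hsub
      have := card_erase_add_one (s := (G.neighborFinset v).erase a)
        (by simpa using ⟨hac.symm, hvc⟩)
      have := card_erase_add_one (s := G.neighborFinset v) (by simpa using hva)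
      omega
  have := card_union_add_card_inter X Y
  omega

theorem le_rootedC4Count (v : V) :
    2 * ((G.degree v : ℤ) - 2) * G.nbhdOrderedEdgeCount v -
        G.degree v * (G.degree v - 1) * (G.degree v - 2) ≤ G.rootedC4Count v := by
  set N := G.neighborFinset v with hN
  set k := G.degree v with hk
  set s := G.nbhdOrderedEdgeCount v
  have hNk : #N = k := card_neighborFinset_eq_degree G v
  have hrow : ∀ a ∈ N,
      ((k : ℤ) - 4) * #(N ∩ G.neighborFinset a) + s + 2 * (k - 1) - (k - 1) * k ≤
        ∑ c ∈ N.erase a, (#((G.neighborFinset a ∩ G.neighborFinset c).erase v) : ℤ) := by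
    intro a ha
    have hsum := sum_le_sum fun c hc => G.card_inter_add_card_inter_le
      ((mem_neighborFinset G v a).1 ha) ((mem_neighborFinset G v c).1 (mem_of_mem_erase hc))
      (ne_of_mem_erase hc).symm
    have hrest :
        ∑ c ∈ N.erase a, #(N ∩ G.neighborFinset c) + #(N ∩ G.neighborFinset a) = s :=
      sum_erase_add N _ ha
    have hadj :
        ∑ c ∈ N.erase a, (if G.Adj a c then 2 else 0) = 2 * #(N ∩ G.neighborFinset a) := by
      rw [← sum_filter, sum_const, smul_eq_mul, mul_comm]
      congr 2
      ext c
      simp only [N, mem_filter, mem_erase, mem_inter, mem_neighborFinset]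
      grind [G.ne_of_adj]
    have hcard : #(N.erase a) + 1 = k := hNk ▸ card_erase_add_one ha
    simp only [sum_add_distrib, sum_const, smul_eq_mul, ← hN, ← hk, hadj] at hsum
    zify at hsum hrest
    rw [show (#(N.erase a) : ℤ) = k - 1 by omega] at hsum
    linarith
  calc 2 * ((k : ℤ) - 2) * s - k * (k - 1) * (k - 2)
      = ∑ a ∈ N,
          (((k : ℤ) - 4) * #(N ∩ G.neighborFinset a) + s + 2 * (k - 1) - (k - 1) * k) := by
        simp only [sum_sub_distrib, sum_add_distrib, ← mul_sum, sum_const, hNk, nsmul_eq_mul]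
        push_cast [s, nbhdOrderedEdgeCount]
        ring
    _ ≤ G.rootedC4Count v := by
        push_cast [rootedC4Count]
        exact sum_le_sum hrow

theorem IsRegularOfDegree.le_c4Labeled {d : ℕ} (hreg : G.IsRegularOfDegree d) :
    12 * ((d : ℤ) - 2) * triCount G - Fintype.card V * (d * (d - 1) * (d - 2)) ≤
      c4Labeled G := by
  calc 12 * ((d : ℤ) - 2) * triCount G - Fintype.card V * (d * (d - 1) * (d - 2))
      = ∑ v, (2 * ((d : ℤ) - 2) * G.nbhdOrderedEdgeCount v - d * (d - 1) * (d - 2)) := by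
        rw [sum_sub_distrib, ← mul_sum, sum_const, card_univ, nsmul_eq_mul]
        have h6 : (6 * triCount G : ℤ) = ∑ v, (G.nbhdOrderedEdgeCount v : ℤ) := by
          exact_mod_cast G.six_mul_triCount
        linear_combination 2 * ((d : ℤ) - 2) * h6
    _ ≤ ∑ v, (G.rootedC4Count v : ℤ) := sum_le_sum fun v _ => hreg v ▸ G.le_rootedC4Count v
    _ = c4Labeled G := by push_cast [c4Labeled_eq_sum]; rfl

end Counting

theorem IsRegularOfDegree.le_rho4 {V : Type*} [Fintype V] [Nonempty V] {G : SimpleGraph V}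
    [DecidableRel G.Adj] {d : ℕ} (hreg : G.IsRegularOfDegree d) :
    3 * ((d : ℝ) - 2) / 2 * rho3 G - d * (d - 1) * (d - 2) / 8 ≤ rho4 G := by
  classical
  have hn : (0 : ℝ) < Fintype.card V := by exact_mod_cast Fintype.card_pos
  have hG : 12 * ((d : ℝ) - 2) * triCount G - Fintype.card V * (d * (d - 1) * (d - 2)) ≤
      c4Labeled G := by exact_mod_cast hreg.le_c4Labeled
  calc 3 * ((d : ℝ) - 2) / 2 * rho3 G - d * (d - 1) * (d - 2) / 8
      = (12 * ((d : ℝ) - 2) * triCount G - Fintype.card V * (d * (d - 1) * (d - 2))) /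
          (8 * Fintype.card V) := by
        rw [rho3]
        field_simp
        ring
    _ ≤ rho4 G := by
        rw [rho4]
        gcongr

section Complete

variable {W : Type*} [Fintype W]

theorem nbhdOrderedEdgeCount_top [DecidableEq W] {R : Type*} [CommRing R] (v : W) :
    ((⊤ : SimpleGraph W).nbhdOrderedEdgeCount v : R) =
      (Fintype.card W - 1) * (Fintype.card W - 2) := by
  have hcodeg : ∀ a ∈ ({v}ᶜ : Finset W), (#({v}ᶜ ∩ {a}ᶜ) : R) = Fintype.card W - 2 := by
    intro a ha
    rw [← compl_union, cast_card_compl, ← insert_eq, card_pair (by simpa [eq_comm] using ha)]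
    push_cast
    ring
  push_cast [nbhdOrderedEdgeCount, neighborFinset_top]
  rw [sum_congr rfl hcodeg, sum_const, nsmul_eq_mul, cast_card_compl, card_singleton]
  push_cast
  ring

theorem rootedC4Count_top [DecidableEq W] {R : Type*} [CommRing R] (v : W) :
    ((⊤ : SimpleGraph W).rootedC4Count v : R) =
      (Fintype.card W - 1) * (Fintype.card W - 2) * (Fintype.card W - 3) := by
  have hcodeg : ∀ a ∈ ({v}ᶜ : Finset W), ∀ c ∈ ({v}ᶜ : Finset W).erase a,
      (#(({a}ᶜ ∩ {c}ᶜ : Finset W).erase v) : R) = Fintype.card W - 3 := by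
    intro a ha c hc
    rw [show ({a}ᶜ ∩ {c}ᶜ : Finset W).erase v = {v, a, c}ᶜ by ext; simp, cast_card_compl,
      card_eq_three.2 ⟨v, a, c, by simp_all [eq_comm], by simp_all [eq_comm],
        by simp_all [eq_comm], rfl⟩]
    push_cast
    ring
  have hrow : ∀ a ∈ ({v}ᶜ : Finset W),
      ∑ c ∈ ({v}ᶜ : Finset W).erase a, (#(({a}ᶜ ∩ {c}ᶜ : Finset W).erase v) : R) =
        (Fintype.card W - 2) * (Fintype.card W - 3) := by
    intro a ha
    rw [sum_congr rfl (hcodeg a ha), sum_const, nsmul_eq_mul,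
      show ({v}ᶜ : Finset W).erase a = {v, a}ᶜ by ext; simp [and_comm], cast_card_compl,
      card_pair (by simpa [eq_comm] using ha)]
    push_cast
    ring
  push_cast [rootedC4Count, neighborFinset_top]
  rw [sum_congr rfl hrow, sum_const, nsmul_eq_mul, cast_card_compl, card_singleton]
  push_cast
  ring

variable [Nonempty W]

theorem rho3_top :
    rho3 (⊤ : SimpleGraph W) = (Fintype.card W - 1) * (Fintype.card W - 2) / 6 := by
  classical
  have h := congrArg (Nat.cast : ℕ → ℝ) (six_mul_triCount (⊤ : SimpleGraph W))
  push_cast [nbhdOrderedEdgeCount_top, sum_const, card_univ] at h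
  have hm : (0 : ℝ) < Fintype.card W := by exact_mod_cast Fintype.card_pos
  rw [rho3, div_eq_div_iff hm.ne' (by norm_num)]
  linear_combination h

theorem rho4_top :
    rho4 (⊤ : SimpleGraph W) =
      (Fintype.card W - 1) * (Fintype.card W - 2) * (Fintype.card W - 3) / 8 := by
  classical
  have h := congrArg (Nat.cast : ℕ → ℝ) (c4Labeled_eq_sum (⊤ : SimpleGraph W))
  push_cast [rootedC4Count_top, sum_const, card_univ] at h
  have hm : (0 : ℝ) < Fintype.card W := by exact_mod_cast Fintype.card_pos
  rw [rho4, div_eq_div_iff (by positivity) (by norm_num)]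
  linear_combination 8 * h

end Complete

end SimpleGraph

theorem four_cycle_density_gap_general {V : Type*} [Fintype V] [Nonempty V]
    (d : ℕ) (G : SimpleGraph V) [DecidableRel G.Adj]
    (hreg : G.IsRegularOfDegree d) :
    rho4 (⊤ : SimpleGraph (Fin (d + 1))) - rho4 G ≤
      3 * ((d : ℝ) - 2) / 2 * (rho3 (⊤ : SimpleGraph (Fin (d + 1))) - rho3 G) := by
  rw [rho3_top, rho4_top, Fintype.card_fin]
  push_cast
  linear_combination hreg.le_rho4

/-- if `G` is `d`-regular with no connected component isomorphic to
`K_{d+1}` (equivalently, for a `d`-regular graph, no `(d+1)`-clique), then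
`ρ(C₄, K_{d+1}) − ρ(C₄, G) ≤ (3(d-2)/2)·(ρ(C₃, K_{d+1}) − ρ(C₃, G))`. -/
theorem four_cycle_density_gap {V : Type*} [Fintype V] [Nonempty V]
    (d : ℕ) (G : SimpleGraph V) [DecidableRel G.Adj]
    (hreg : G.IsRegularOfDegree d) (hfree : G.CliqueFree (d + 1)) :
    rho4 (⊤ : SimpleGraph (Fin (d + 1))) - rho4 G ≤
      3 * ((d : ℝ) - 2) / 2 * (rho3 (⊤ : SimpleGraph (Fin (d + 1))) - rho3 G) :=
  four_cycle_density_gap_general d G hreg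
end
end

section
/- Let d be even and G a finite simple d-regular graph with no connected component isomorphic to K_{d+1}. Then G has a matching of size at least ((d+2)/(2(d+3)))·v(G). -/
/-!
By the Tutte–Berge formula it suffices to show that deleting any vertex set `U` from `G` leaves
at most `|U| + n/(d+3)` odd components. The formula itself follows from Tutte's theorem applied
to `G` joined with `b` universal vertices.

For an odd component `C` of `G - U` sending `∂C` edges to `U` we have
`d(d+3) ≤ d|C| + (d+2)∂C`: this is clear if `|C| ≥ d+3`; `|C| = d+2` is impossible since `d` is
even; if `|C| ≤ d` every vertex of `C` has at least `d+1-|C|` neighbours outside `C`, so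
`∂C ≥ d`; and if `|C| = d+1` then `∂C ≥ 2`, since otherwise all but at most one vertex of `C`
have all their `d` neighbours in `C` and `C` is a `K_{d+1}`. Summing over the odd components and
using `∑|C| ≤ n - |U|`, `∑∂C ≤ d|U|` gives `(d+3) o(G - U) ≤ n + (d+1)|U|`.
-/

open Finset SimpleGraph

noncomputable section

namespace SimpleGraph

variable {V W : Type*}

abbrev oddComponentCount (G : SimpleGraph V) (u : Set V) : ℕ :=
  ((⊤ : G.Subgraph).deleteVerts u).coe.oddComponents.ncard

lemma oddComponentCount_add_ncard_modEq [Finite V] (G : SimpleGraph V) (u : Set V) :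
    G.oddComponentCount u + u.ncard ≡ Nat.card V [MOD 2] := by
  have hodd := ((⊤ : G.Subgraph).deleteVerts u).coe.odd_ncard_oddComponents
  have hcard : Nat.card ((⊤ : G.Subgraph).deleteVerts u).verts + u.ncard = Nat.card V := by
    rw [Subgraph.deleteVerts_verts, Subgraph.verts_top, Nat.card_coe_set_eq,
      ← Set.compl_eq_univ_sdiff, add_comm, Set.ncard_add_ncard_compl]
  rw [Nat.odd_iff, Nat.odd_iff] at hodd
  unfold Nat.ModEq oddComponentCount
  omega

lemma Iso.ncard_oddComponents_eq {G : SimpleGraph V} {G' : SimpleGraph W} (φ : G ≃g G') :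
    G.oddComponents.ncard = G'.oddComponents.ncard := by
  have hsupp (c : G.ConnectedComponent) :
      (φ.connectedComponentEquiv c).supp.ncard = c.supp.ncard := by
    simpa only [Nat.card_coe_set_eq] using
      (Nat.card_congr (ConnectedComponent.isoEquivSupp φ c)).symm
  rw [← Set.ncard_image_of_injective _ φ.connectedComponentEquiv.injective]
  congr 1
  ext c'
  obtain ⟨c, rfl⟩ := φ.connectedComponentEquiv.surjective c'
  simp only [Set.mem_image, Set.mem_ofPred_eq, EmbeddingLike.apply_eq_iff_eq, exists_eq_right,
    hsupp]

lemma ncard_oddComponents_le_one_of_forall_adj [Finite V] (G : SimpleGraph V) {w : V}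
    (hw : ∀ v, v ≠ w → G.Adj w v) : G.oddComponents.ncard ≤ 1 := by
  have hc (c : G.ConnectedComponent) : c = G.connectedComponentMk w := by
    induction c using ConnectedComponent.ind with
    | h v =>
      rcases eq_or_ne v w with rfl | hvw
      · rfl
      · exact ConnectedComponent.connectedComponentMk_eq_of_adj (hw v hvw).symm
  exact (Set.ncard_le_one (Set.toFinite _)).2 fun a _ b _ => (hc a).trans (hc b).symm

def addUniversalVerts (G : SimpleGraph V) (b : ℕ) : SimpleGraph (V ⊕ Fin b) :=
  (G ⊕g ⊤) ⊔ completeBipartiteGraph V (Fin b)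

section addUniversalVerts

variable {G : SimpleGraph V} {b : ℕ}

@[simp]
lemma addUniversalVerts_adj_inl_inl {v w : V} :
    (G.addUniversalVerts b).Adj (.inl v) (.inl w) ↔ G.Adj v w := by
  simp [addUniversalVerts, completeBipartiteGraph]

lemma addUniversalVerts_adj_inr {j : Fin b} {x : V ⊕ Fin b} (hx : x ≠ .inr j) :
    (G.addUniversalVerts b).Adj (.inr j) x := by
  cases x with
  | inl v => simp [addUniversalVerts, completeBipartiteGraph]
  | inr i => simpa [addUniversalVerts] using fun h => hx (congrArg _ h.symm)

lemma oddComponentCount_addUniversalVerts {u : Set (V ⊕ Fin b)} (hu : ∀ j, .inr j ∈ u) :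
    (G.addUniversalVerts b).oddComponentCount u = G.oddComponentCount (Sum.inl ⁻¹' u) := by
  let f (x : ((⊤ : G.Subgraph).deleteVerts (Sum.inl ⁻¹' u)).verts) :
      ((⊤ : (G.addUniversalVerts b).Subgraph).deleteVerts u).verts :=
    ⟨.inl x.1, by simpa using x.2⟩
  have hf : Function.Bijective f := by
    refine ⟨fun x y h => Subtype.ext (Sum.inl.inj (congrArg Subtype.val h)), ?_⟩
    rintro ⟨x | j, hx⟩
    · exact ⟨⟨x, by simpa using hx⟩, rfl⟩
    · simp [hu j] at hx
  exact (Iso.ncard_oddComponents_eq ⟨Equiv.ofBijective f hf, by simp [f]⟩).symm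

lemma ncard_preimage_inl_add_le [Finite V] (u : Set (V ⊕ Fin b)) (hu : ∀ j, .inr j ∈ u) :
    (Sum.inl ⁻¹' u).ncard + b ≤ u.ncard := by
  have hsub : Sum.inl '' (Sum.inl ⁻¹' u) ∪ Set.range Sum.inr ⊆ u := by
    rintro _ (⟨v, hv, rfl⟩ | ⟨j, rfl⟩)
    exacts [hv, hu j]
  have hdisj : Disjoint (Sum.inl '' (Sum.inl ⁻¹' u)) (Set.range (Sum.inr : Fin b → V ⊕ Fin b)) := by
    simp [Set.disjoint_left]
  calc (Sum.inl ⁻¹' u).ncard + b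
      = (Sum.inl '' (Sum.inl ⁻¹' u) ∪ Set.range Sum.inr).ncard := by
        rw [Set.ncard_union_eq hdisj, Set.ncard_image_of_injective _ Sum.inl_injective,
          Set.ncard_range_of_injective Sum.inr_injective, Nat.card_fin]
    _ ≤ u.ncard := Set.ncard_le_ncard hsub

lemma not_isTutteViolator_addUniversalVerts [Finite V] (hpar : Even (Nat.card V + b))
    (h : ∀ u, G.oddComponentCount u ≤ u.ncard + b) (u : Set (V ⊕ Fin b)) :
    ¬(G.addUniversalVerts b).IsTutteViolator u := by
  rw [IsTutteViolator, not_lt]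
  change (G.addUniversalVerts b).oddComponentCount u ≤ u.ncard
  by_cases hu : ∀ j, .inr j ∈ u
  · rw [oddComponentCount_addUniversalVerts hu]
    exact (h _).trans (ncard_preimage_inl_add_le u hu)
  · push Not at hu
    obtain ⟨j, hj⟩ := hu
    have hle : (G.addUniversalVerts b).oddComponentCount u ≤ 1 :=
      ncard_oddComponents_le_one_of_forall_adj _ (w := ⟨.inr j, by simpa using hj⟩)
        fun x hx => by
          simpa [hj, show (x : V ⊕ Fin b) ∉ u by simpa using x.2] using
            addUniversalVerts_adj_inr (G := G) fun h => hx (Subtype.ext h)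
    rcases u.eq_empty_or_nonempty with rfl | hne
    · have hmod := (G.addUniversalVerts b).oddComponentCount_add_ncard_modEq ∅
      rw [Nat.card_sum, Nat.card_fin] at hmod
      rw [Nat.even_iff] at hpar
      unfold Nat.ModEq at hmod
      simp only [Set.ncard_empty] at hmod ⊢
      omega
    · have := (Set.ncard_pos (Set.toFinite u)).2 hne
      omega

lemma exists_isMatching_of_isPerfectMatching_addUniversalVerts [Finite V]
    {M : (G.addUniversalVerts b).Subgraph} (hM : M.IsPerfectMatching) :
    ∃ M' : G.Subgraph, M'.IsMatching ∧ Nat.card V ≤ M'.verts.ncard + b := by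
  let M' : G.Subgraph :=
    { verts := {v | ∃ w, M.Adj (.inl v) (.inl w)}
      Adj v w := M.Adj (.inl v) (.inl w)
      adj_sub h := addUniversalVerts_adj_inl_inl.1 (M.adj_sub h)
      edge_vert h := ⟨_, h⟩
      symm := ⟨fun _ _ h => h.symm⟩ }
  refine ⟨M', fun v ⟨w, hw⟩ => ⟨w, hw, fun w' hw' => ?_⟩, ?_⟩
  · exact Sum.inl.inj (hM.1.eq_of_adj_left hw' hw : (.inl w' : V ⊕ Fin b) = .inl w)
  choose p hp _ using Subgraph.isPerfectMatching_iff.1 hM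
  have hunmatched : M'.vertsᶜ.ncard ≤ b := by
    calc M'.vertsᶜ.ncard ≤ (Set.range (Sum.inr : Fin b → V ⊕ Fin b)).ncard := by
          refine Set.ncard_le_ncard_of_injOn (p ∘ .inl) (fun v hv => ?_) ?_
          · rcases hpv : p (.inl v) with w | j
            · exact absurd ⟨w, hpv ▸ hp (.inl v)⟩ hv
            · exact ⟨j, hpv.symm⟩
          · intro v _ v' _ h
            have hv' := hp (.inl v')
            rw [← Function.comp_apply (f := p), ← h] at hv'
            exact Sum.inl.inj (hM.1.eq_of_adj_right (hp _) hv')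
      _ = b := by rw [Set.ncard_range_of_injective Sum.inr_injective, Nat.card_fin]
  have := Set.ncard_add_ncard_compl M'.verts
  omega

end addUniversalVerts

theorem exists_isMatching_card_le_ncard_verts_add [Finite V] (G : SimpleGraph V) {b : ℕ}
    (h : ∀ u, G.oddComponentCount u ≤ u.ncard + b) :
    ∃ M : G.Subgraph, M.IsMatching ∧ Nat.card V ≤ M.verts.ncard + b := by
  obtain ⟨b', hb', hpar, h'⟩ : ∃ b' ≤ b, Even (Nat.card V + b') ∧
      ∀ u, G.oddComponentCount u ≤ u.ncard + b' := by
    by_cases hpar : Even (Nat.card V + b)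
    · exact ⟨b, le_rfl, hpar, h⟩
    · -- `o(G - u) + |u| ≡ |V| ≢ b (mod 2)`, so the bound `o(G - u) ≤ |u| + b` is never attained.
      refine ⟨b - 1, Nat.sub_le _ _, ?_, fun u => ?_⟩
      all_goals
        have h₀ := h ∅
        have hmod₀ := G.oddComponentCount_add_ncard_modEq ∅
        simp only [Nat.even_iff, Nat.ModEq, Set.ncard_empty] at hpar hmod₀ h₀ ⊢
      · omega
      · have hu := h u
        have hmod := G.oddComponentCount_add_ncard_modEq u
        unfold Nat.ModEq at hmod
        omega
  obtain ⟨M, hM⟩ := tutte.2 (not_isTutteViolator_addUniversalVerts hpar h')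
  obtain ⟨M', hM', hcard⟩ := exists_isMatching_of_isPerfectMatching_addUniversalVerts hM
  exact ⟨M', hM', hcard.trans (by omega)⟩

section Counting

variable [Fintype V] [DecidableEq V] {G : SimpleGraph V} [DecidableRel G.Adj] {d : ℕ}
  {C : Finset V} {v : V}

lemma degree_le_card_sub_one_add_card_sdiff (hv : v ∈ C) :
    G.degree v ≤ #C - 1 + #(G.neighborFinset v \ C) := by
  have hinter : G.neighborFinset v ∩ C ⊆ C.erase v := fun w hw =>
    mem_erase.2 ⟨(G.ne_of_adj ((G.mem_neighborFinset v w).1 (mem_inter.1 hw).1)).symm,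
      (mem_inter.1 hw).2⟩
  have := card_le_card hinter
  rw [card_erase_of_mem hv] at this
  rw [← card_neighborFinset_eq_degree, ← card_inter_add_card_sdiff (G.neighborFinset v) C]
  omega

lemma adj_of_neighborFinset_subset (hreg : G.IsRegularOfDegree d) (hC : #C = d + 1)
    (hv : v ∈ C) (hsub : G.neighborFinset v ⊆ C) {w : V} (hw : w ∈ C) (hvw : v ≠ w) :
    G.Adj v w := by
  have hN : G.neighborFinset v ∩ C = C.erase v := by
    refine eq_of_subset_of_card_le (fun x hx => mem_erase.2 ⟨?_, (mem_inter.1 hx).2⟩) ?_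
    · exact (G.ne_of_adj ((G.mem_neighborFinset v x).1 (mem_inter.1 hx).1)).symm
    · rw [inter_eq_left.2 hsub, card_neighborFinset_eq_degree, hreg v, card_erase_of_mem hv, hC]
      rfl
  have hw' : w ∈ G.neighborFinset v ∩ C := hN ▸ mem_erase.2 ⟨hvw.symm, hw⟩
  exact (G.mem_neighborFinset v w).1 (mem_inter.1 hw').1

lemma isNClique_of_sum_card_sdiff_le_one (hreg : G.IsRegularOfDegree d) (hC : #C = d + 1)
    (h : ∑ v ∈ C, #(G.neighborFinset v \ C) ≤ 1) : G.IsNClique (d + 1) C := by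
  refine ⟨fun x hx y hy hxy => ?_, hC⟩
  have hpair := sum_le_sum_of_subset (f := fun v => #(G.neighborFinset v \ C))
    (show {x, y} ⊆ C by simp_all [insert_subset_iff])
  rw [sum_pair hxy] at hpair
  by_cases hx0 : #(G.neighborFinset x \ C) = 0
  · exact adj_of_neighborFinset_subset hreg hC hx (sdiff_eq_empty_iff_subset.1
      (card_eq_zero.1 hx0)) hy hxy
  · exact (adj_of_neighborFinset_subset hreg hC hy (sdiff_eq_empty_iff_subset.1
      (card_eq_zero.1 (by omega))) hx (Ne.symm hxy)).symm

lemma le_sum_card_sdiff_of_card_le (hreg : G.IsRegularOfDegree d) (hC : C.Nonempty)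
    (hm : #C ≤ d) : d ≤ ∑ v ∈ C, #(G.neighborFinset v \ C) := by
  have hv : ∀ v ∈ C, d + 1 - #C ≤ #(G.neighborFinset v \ C) := by
    intro v hv
    have := degree_le_card_sub_one_add_card_sdiff (G := G) hv
    rw [hreg v] at this
    have := card_pos.2 ⟨v, hv⟩
    omega
  have hsum := card_nsmul_le_sum C _ _ hv
  have hpos := hC.card_pos
  rw [smul_eq_mul] at hsum
  obtain ⟨j, hj⟩ : ∃ j, d = #C + j := ⟨d - #C, by omega⟩
  rw [hj, show #C + j + 1 - #C = j + 1 by omega] at hsum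
  nlinarith

theorem mul_add_three_le_of_odd_card (hreg : G.IsRegularOfDegree d) (hd : Even d)
    (hfree : G.CliqueFree (d + 1)) (hC : Odd #C) :
    d * (d + 3) ≤ d * #C + (d + 2) * ∑ v ∈ C, #(G.neighborFinset v \ C) := by
  obtain hbig | hsmall | hclique : d + 3 ≤ #C ∨ #C ≤ d ∨ #C = d + 1 := by
    obtain ⟨k, hk⟩ := hd
    obtain ⟨l, hl⟩ := hC
    omega
  · exact (Nat.mul_le_mul_left d hbig).trans (Nat.le_add_right _ _)
  · have := le_sum_card_sdiff_of_card_le hreg (card_pos.1 hC.pos) hsmall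
    nlinarith [hC.pos]
  · have : 2 ≤ ∑ v ∈ C, #(G.neighborFinset v \ C) := by
      by_contra! h
      exact hfree C (isNClique_of_sum_card_sdiff_le_one hreg hclique (by omega))
    rw [hclique]
    nlinarith

lemma sum_card_neighborFinset_inter (U : Finset V) :
    ∑ v, #(G.neighborFinset v ∩ U) = ∑ u ∈ U, G.degree u := by
  calc ∑ v, #(G.neighborFinset v ∩ U) = ∑ v, ∑ u ∈ U, if G.Adj v u then 1 else 0 := by
        simp [sum_boole, neighborFinset_eq_filter, inter_comm, inter_filter]
    _ = ∑ u ∈ U, ∑ v, if G.Adj v u then 1 else 0 := sum_comm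
    _ = ∑ u ∈ U, G.degree u := by
        simp [sum_boole, ← card_neighborFinset_eq_degree, neighborFinset_eq_filter, adj_comm]

theorem add_three_mul_card_le {ι : Type*} (hreg : G.IsRegularOfDegree d) (hd : Even d)
    (hfree : G.CliqueFree (d + 1)) {s : Finset ι} {C : ι → Finset V} {U : Finset V}
    (hdisj : (s : Set ι).PairwiseDisjoint C) (hodd : ∀ i ∈ s, Odd #(C i))
    (hU : ∀ i ∈ s, Disjoint (C i) U)
    (hclosed : ∀ i ∈ s, ∀ v ∈ C i, G.neighborFinset v \ C i ⊆ U) :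
    (d + 3) * #s ≤ Fintype.card V + (d + 1) * #U := by
  obtain rfl | ⟨i, hi⟩ := s.eq_empty_or_nonempty
  · simp
  have hd0 : 0 < d := by
    obtain ⟨v, -⟩ := card_pos.1 (hodd i hi).pos
    by_contra! h
    rw [Nat.le_zero.1 h, zero_add, cliqueFree_one] at hfree
    exact hfree.false v
  have hsize : ∑ i ∈ s, #(C i) + #U ≤ Fintype.card V := by
    rw [← card_biUnion hdisj, ← card_union_of_disjoint ((disjoint_biUnion_left _ _ _).2 hU)]
    exact card_le_univ _
  have hboundary : ∑ i ∈ s, ∑ v ∈ C i, #(G.neighborFinset v \ C i) ≤ d * #U :=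
    calc ∑ i ∈ s, ∑ v ∈ C i, #(G.neighborFinset v \ C i)
        ≤ ∑ i ∈ s, ∑ v ∈ C i, #(G.neighborFinset v ∩ U) :=
          sum_le_sum fun i hi => sum_le_sum fun v hv =>
            card_le_card (subset_inter sdiff_subset (hclosed i hi v hv))
      _ = ∑ v ∈ s.biUnion C, #(G.neighborFinset v ∩ U) := (sum_biUnion hdisj).symm
      _ ≤ ∑ v, #(G.neighborFinset v ∩ U) := sum_le_sum_of_subset (subset_univ _)
      _ = d * #U := by
        rw [sum_card_neighborFinset_inter, sum_const_nat fun u _ => hreg u, mul_comm]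
  have hcomponents := sum_le_sum fun i hi => mul_add_three_le_of_odd_card hreg hd hfree (hodd i hi)
  rw [sum_const, smul_eq_mul, sum_add_distrib, ← mul_sum, ← mul_sum] at hcomponents
  refine Nat.le_of_mul_le_mul_left ?_ hd0
  nlinarith [Nat.mul_le_mul_left d hsize, Nat.mul_le_mul_left (d + 2) hboundary]

end Counting

theorem add_three_mul_oddComponentCount_le [Fintype V] {G : SimpleGraph V} [DecidableRel G.Adj]
    {d : ℕ} (hreg : G.IsRegularOfDegree d) (hd : Even d) (hfree : G.CliqueFree (d + 1))
    (u : Set V) :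
    (d + 3) * G.oddComponentCount u ≤ Fintype.card V + (d + 1) * u.ncard := by
  classical
  set H := (⊤ : G.Subgraph).deleteVerts u
  let C (c : H.coe.ConnectedComponent) : Finset V :=
    (Set.toFinite (Subtype.val '' (c : Set H.verts))).toFinset
  have hC {c v} : v ∈ C c ↔ v ∈ Subtype.val '' (c : Set H.verts) := Set.Finite.mem_toFinset _
  have hCu {c v} (hv : v ∈ C c) : v ∉ u := by
    obtain ⟨⟨v, hv'⟩, -, rfl⟩ := hC.1 hv
    simpa [H] using hv'
  have := add_three_mul_card_le hreg hd hfree (s := (Set.toFinite H.coe.oddComponents).toFinset)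
    (C := C) (U := u.toFinset) ?_ ?_ ?_ ?_
  · rwa [← Set.ncard_eq_toFinset_card, ← Set.ncard_eq_toFinset_card'] at this
  · intro c _ c' _ hcc'
    simp only [Function.onFun, C, Set.Finite.disjoint_toFinset]
    exact (Set.disjoint_image_iff Subtype.val_injective).2
      (pairwise_disjoint_supp_connectedComponent _ hcc')
  · intro c hc
    rw [← Set.ncard_eq_toFinset_card, Set.ncard_image_of_injective _ Subtype.val_injective]
    exact ((Set.Finite.mem_toFinset _).1 hc : c ∈ H.coe.oddComponents)
  · exact fun c _ => Finset.disjoint_left.2 fun v hv hvu => hCu hv (Set.mem_toFinset.1 hvu)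
  · intro c _ v hv w hw
    rw [mem_sdiff, mem_neighborFinset, hC] at hw
    by_contra hwu
    rw [Set.mem_toFinset] at hwu
    exact hw.2 (ConnectedComponent.mem_coe_supp_of_adj (hC.1 hv) (by simpa [H] using hwu)
      (by simpa [H] using ⟨hCu hv, hwu, hw.1⟩))

namespace Subgraph.IsMatching

variable {G : SimpleGraph V} {M : G.Subgraph} [Fintype M.edgeSet]

theorem isMatchingSet (hM : M.IsMatching) : IsMatchingSet G M.edgeSet.toFinset := by
  refine ⟨fun e he => M.edgeSet_subset (Set.mem_toFinset.1 he),
    fun e he f hf hef v ⟨hve, hvf⟩ => hef ?_⟩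
  rw [Set.mem_toFinset] at he hf
  obtain ⟨w, rfl⟩ := Sym2.mem_iff_exists.1 hve
  obtain ⟨w', rfl⟩ := Sym2.mem_iff_exists.1 hvf
  rw [hM.eq_of_adj_left (M.mem_edgeSet.1 he) (M.mem_edgeSet.1 hf)]

theorem ncard_verts_le (hM : M.IsMatching) : M.verts.ncard ≤ 2 * #M.edgeSet.toFinset := by
  have hedge (e : Sym2 V) : (e : Set V).ncard ≤ 2 := by
    induction e with
    | h x y => simpa using Set.ncard_insert_le x {y}
  calc M.verts.ncard = (⋃ e ∈ M.edgeSet.toFinset, (e : Set V)).ncard := by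
        simp [hM.verts_eq_biUnion_edgeSet]
    _ ≤ ∑ e ∈ M.edgeSet.toFinset, (e : Set V).ncard := set_ncard_biUnion_le _ _
    _ ≤ ∑ _e ∈ M.edgeSet.toFinset, 2 := sum_le_sum fun e _ => hedge e
    _ = 2 * #M.edgeSet.toFinset := by rw [sum_const, smul_eq_mul, mul_comm]

end Subgraph.IsMatching

end SimpleGraph

/-- if `d` is even and `G` is a finite simple `d`-regular graph with
no connected component isomorphic to `K_{d+1}` (equivalently, for a `d`-regular
graph, no `(d+1)`-clique), then `G` has a matching of size at least
`((d+2)/(2(d+3)))·v(G)`. -/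
theorem large_matching_even_degree {V : Type*} [Fintype V]
    (d : ℕ) (hdev : Even d) (G : SimpleGraph V) [DecidableRel G.Adj]
    (hreg : G.IsRegularOfDegree d) (hfree : G.CliqueFree (d + 1)) :
    ∃ M : Finset (Sym2 V), IsMatchingSet G M ∧
      ((d : ℝ) + 2) / (2 * ((d : ℝ) + 3)) * (Fintype.card V) ≤ M.card := by
  classical
  set n := Fintype.card V
  have hdefect (u : Set V) : G.oddComponentCount u ≤ u.ncard + n / (d + 3) := by
    have h := add_three_mul_oddComponentCount_le hreg hdev hfree u
    have := Nat.lt_mul_div_succ n (show 0 < d + 3 by omega)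
    by_contra! hlt
    nlinarith
  obtain ⟨M, hM, hcard⟩ := G.exists_isMatching_card_le_ncard_verts_add hdefect
  refine ⟨M.edgeSet.toFinset, hM.isMatchingSet, ?_⟩
  have hverts := hM.ncard_verts_le
  have hdiv : ((n / (d + 3) : ℕ) : ℝ) ≤ n / (d + 3) := by exact_mod_cast Nat.cast_div_le
  rw [Nat.card_eq_fintype_card] at hcard
  have hn : (n : ℝ) ≤ 2 * #M.edgeSet.toFinset + n / (d + 3) := by
    have : (n : ℝ) ≤ 2 * #M.edgeSet.toFinset + ((n / (d + 3) : ℕ) : ℝ) := by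
      exact_mod_cast (by omega)
    linarith
  have hcancel : (n : ℝ) / (d + 3) * (d + 3) = n := div_mul_cancel₀ _ (by positivity)
  rw [div_mul_eq_mul_div, div_le_iff₀ (by positivity)]
  nlinarith [mul_le_mul_of_nonneg_right hn (show (0 : ℝ) ≤ d + 3 by positivity)]
end
end
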